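/- arXiv:0712.1047 — 8 statements merged into one kernel-verified Lean document; each statement's English description precedes it below -/
import Mathlib

section
/- A supersolvable antimatroid is an antimatroid. That is, if (E, F, ≤_E) is a set system with totally ordered finite ground set E satisfying (i) ∅ ∈ F and (ii) for all A, B ∈ F with B ⊄ A, letting x = min(B \ A) with respect to ≤_E, we have A ∪ {x} ∈ F, then (E, F) satisfies the antimatroid axioms: it is accessible (every nonempty feasible set has an element whose removal leaves a feasible set) and for all A, B ∈ F with B ⊄ A there exists x ∈ B \ A with A ∪ {x} ∈ F. -/
/-- a supersolvable antimatroid is an antimatroid: if `F` is a family of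
subsets of a finite totally ordered ground set `E` with `∅ ∈ F` such that for all
`A, B ∈ F` with `B ⊄ A` the set `A ∪ {min (B \ A)}` is in `F`, then `(E, F)` is
accessible and satisfies the antimatroid exchange axiom. -/
theorem supersolvable_antimatroid_is_antimatroid {E : Type*} [Fintype E] [LinearOrder E]
    (F : Finset (Finset E)) (h0 : ∅ ∈ F)
    (hss : ∀ A ∈ F, ∀ B ∈ F, ∀ (h : ¬ B ⊆ A),
      insert ((B \ A).min' (Finset.sdiff_nonempty.mpr h)) A ∈ F) :
    (∀ A ∈ F, A ≠ ∅ → ∃ x ∈ A, A.erase x ∈ F) ∧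
    (∀ A ∈ F, ∀ B ∈ F, ¬ B ⊆ A → ∃ x ∈ B \ A, insert x A ∈ F) := by
  constructor
  · intro A hA hAne
    -- take a proper feasible subset of A of maximal cardinality
    set S := F.filter (fun C => C ⊆ A ∧ C ≠ A) with hS
    have hSne : S.Nonempty := ⟨∅, by
      simp [hS, Finset.mem_filter, h0]
      exact fun h => hAne h.symm⟩
    obtain ⟨C, hCS, hCmax⟩ := S.exists_max_image Finset.card hSne
    rw [hS, Finset.mem_filter] at hCS
    obtain ⟨hCF, hCA, hCne⟩ := hCS
    have hnotsub : ¬ A ⊆ C := fun h => hCne (Finset.Subset.antisymm hCA h)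
    set x := (A \ C).min' (Finset.sdiff_nonempty.mpr hnotsub) with hx
    have hxmem : x ∈ A \ C := Finset.min'_mem _ _
    have hins : insert x C ∈ F := hss C hCF A hA hnotsub
    have hxA : x ∈ A := (Finset.mem_sdiff.mp hxmem).1
    have hxC : x ∉ C := (Finset.mem_sdiff.mp hxmem).2
    have hsub : insert x C ⊆ A := Finset.insert_subset hxA hCA
    have heq : insert x C = A := by
      by_contra hne
      have : insert x C ∈ S := by
        rw [hS, Finset.mem_filter]; exact ⟨hins, hsub, hne⟩
      have := hCmax _ this
      rw [Finset.card_insert_of_notMem hxC] at this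
      omega
    refine ⟨x, hxA, ?_⟩
    have : A.erase x = C := by
      rw [← heq, Finset.erase_insert hxC]
    rw [this]; exact hCF
  · intro A hA B hB h
    exact ⟨_, Finset.min'_mem _ (Finset.sdiff_nonempty.mpr h), hss A hA B hB h⟩
end

section
/- In a supersolvable antimatroid (E, F, ≤_E), every prefix of a feasible set is feasible: if A ∈ F and x ∈ E, then {a ∈ A : a ≤_E x} ∈ F. -/
/-- in a supersolvable antimatroid, every prefix of a feasible set is
feasible: if `A ∈ F` and `x ∈ E` then `{a ∈ A : a ≤ x} ∈ F`. -/
theorem supersolvable_antimatroid_prefix_feasible {E : Type*} [Fintype E] [LinearOrder E]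
    (F : Finset (Finset E)) (h0 : ∅ ∈ F)
    (hss : ∀ A ∈ F, ∀ B ∈ F, ∀ (h : ¬ B ⊆ A),
      insert ((B \ A).min' (Finset.sdiff_nonempty.mpr h)) A ∈ F) :
    ∀ A ∈ F, ∀ x : E, A.filter (· ≤ x) ∈ F := by
  intro A hA x
  set P := A.filter (· ≤ x) with hPdef
  have hPA : P ⊆ A := Finset.filter_subset _ _
  suffices h : ∀ n, ∀ C ∈ F, C ⊆ P → (P \ C).card ≤ n → P ∈ F by
    exact h P.card ∅ h0 (Finset.empty_subset _)
      (Finset.card_le_card (Finset.sdiff_subset))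
  intro n
  induction n with
  | zero =>
    intro C hC hCP hcard
    have h1 : P ⊆ C := Finset.sdiff_eq_empty_iff_subset.mp
      (Finset.card_eq_zero.mp (Nat.le_zero.mp hcard))
    rwa [Finset.Subset.antisymm h1 hCP]
  | succ n ih =>
    intro C hC hCP hcard
    by_cases hsub : P ⊆ C
    · rwa [Finset.Subset.antisymm hsub hCP]
    · have hne : (P \ C).Nonempty := Finset.sdiff_nonempty.mpr hsub
      have hAC : ¬ A ⊆ C := fun h => hsub (hPA.trans h)
      set m := (A \ C).min' (Finset.sdiff_nonempty.mpr hAC) with hm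
      have hmem : m ∈ A \ C := Finset.min'_mem _ _
      obtain ⟨p, hp⟩ := hne
      have hpAC : p ∈ A \ C := by
        rw [Finset.mem_sdiff] at hp ⊢
        exact ⟨hPA hp.1, hp.2⟩
      have hmp : m ≤ p := Finset.min'_le _ _ hpAC
      have hpx : p ≤ x := (Finset.mem_filter.mp (Finset.mem_sdiff.mp hp).1).2
      have hmP : m ∈ P := Finset.mem_filter.mpr
        ⟨(Finset.mem_sdiff.mp hmem).1, le_trans hmp hpx⟩
      have hC' : insert m C ∈ F := hss C hC A hA hAC
      apply ih (insert m C) hC' (Finset.insert_subset hmP hCP)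
      have hsub2 : P \ insert m C ⊆ (P \ C).erase m := by
        intro y hy
        rw [Finset.mem_sdiff, Finset.mem_insert] at hy
        push_neg at hy
        exact Finset.mem_erase.mpr ⟨hy.2.1, Finset.mem_sdiff.mpr ⟨hy.1, hy.2.2⟩⟩
      have hmPC : m ∈ P \ C := Finset.mem_sdiff.mpr ⟨hmP, (Finset.mem_sdiff.mp hmem).2⟩
      calc (P \ insert m C).card ≤ ((P \ C).erase m).card := Finset.card_le_card hsub2
        _ = (P \ C).card - 1 := Finset.card_erase_of_mem hmPC
        _ ≤ n := by omega
end

section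
/- For an accessible set system (E, F) on a finite ground set, the following are equivalent: (1) for all A, B ∈ F with B ⊄ A there exists x ∈ B \ A with A ∪ {x} ∈ F; (2) F is closed under taking unions; (3) whenever A, A ∪ {x}, A ∪ {y} are all in F, then A ∪ {x, y} ∈ F. -/
private lemma antimatroid_aux3 {E : Type*} [DecidableEq E] (F : Finset (Finset E))
    (hacc : ∀ A ∈ F, A ≠ ∅ → ∃ x ∈ A, A.erase x ∈ F)
    (h3 : ∀ (A : Finset E) (x y : E), A ∈ F → insert x A ∈ F → insert y A ∈ F →
        insert x (insert y A) ∈ F) :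
    ∀ n (A B : Finset E), A ∈ F → B ∈ F → A.card + B.card ≤ n →
      A ∪ B ∈ F ∧ ∀ x, insert x A ∈ F → insert x (A ∪ B) ∈ F := by
  intro n
  induction n with
  | zero =>
    intro A B hA hB hle
    have hBe : B = ∅ := Finset.card_eq_zero.mp (by omega)
    subst hBe
    simp only [Finset.union_empty]
    exact ⟨hA, fun x hx => hx⟩
  | succ n ih =>
    intro A B hA hB hle
    by_cases hBe : B = ∅
    · subst hBe
      simp only [Finset.union_empty]
      exact ⟨hA, fun x hx => hx⟩
    · obtain ⟨z, hz, hB'⟩ := hacc B hB hBe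
      have hcard : (B.erase z).card + 1 = B.card := Finset.card_erase_add_one hz
      obtain ⟨hD, hclimbA⟩ := ih A (B.erase z) hA hB' (by omega)
      obtain ⟨-, hclimbB⟩ := ih (B.erase z) A hB' hA (by omega)
      have hBins : insert z (B.erase z) = B := Finset.insert_erase hz
      have hzD : insert z (A ∪ B.erase z) ∈ F := by
        have := hclimbB z (by rw [hBins]; exact hB)
        rwa [Finset.union_comm] at this
      have hAB : A ∪ B = insert z (A ∪ B.erase z) := by
        rw [← hBins, Finset.union_insert, hBins]
      refine ⟨by rw [hAB]; exact hzD, ?_⟩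
      intro x hx
      have h1 := hclimbA x hx
      have := h3 (A ∪ B.erase z) x z hD h1 hzD
      rw [hAB]; exact this

/-- for an accessible set system `(E, F)` on a finite ground set (with
`∅ ∈ F`), the following are equivalent: (1) the antimatroid exchange axiom, (2) `F` is
closed under unions, (3) if `A`, `A ∪ {x}` and `A ∪ {y}` are in `F` then so is
`A ∪ {x, y}`. -/
theorem antimatroid_tfae {E : Type*} [Fintype E] [DecidableEq E]
    (F : Finset (Finset E)) (h0 : ∅ ∈ F)
    (hacc : ∀ A ∈ F, A ≠ ∅ → ∃ x ∈ A, A.erase x ∈ F) :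
    ((∀ A ∈ F, ∀ B ∈ F, ¬ B ⊆ A → ∃ x ∈ B \ A, insert x A ∈ F) ↔
      (∀ A ∈ F, ∀ B ∈ F, A ∪ B ∈ F)) ∧
    ((∀ A ∈ F, ∀ B ∈ F, A ∪ B ∈ F) ↔
      (∀ (A : Finset E) (x y : E), A ∈ F → insert x A ∈ F → insert y A ∈ F →
        insert x (insert y A) ∈ F)) := by
  constructor
  · constructor
    · -- (1) → (2)
      intro h1 A hA B hB
      suffices key : ∀ n (A : Finset E), A ∈ F → (B \ A).card ≤ n → A ∪ B ∈ F by
        exact key _ A hA le_rfl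
      intro n
      induction n with
      | zero =>
        intro A hA h
        have hBA : B ⊆ A := by
          rw [Nat.le_zero, Finset.card_eq_zero, Finset.sdiff_eq_empty_iff_subset] at h
          exact h
        rw [Finset.union_eq_left.mpr hBA]; exact hA
      | succ n ih =>
        intro A hA h
        by_cases hBA : B ⊆ A
        · rw [Finset.union_eq_left.mpr hBA]; exact hA
        · obtain ⟨x, hx, hins⟩ := h1 A hA B hB hBA
          obtain ⟨hxB, hxA⟩ := Finset.mem_sdiff.mp hx
          have heq : insert x A ∪ B = A ∪ B := by
            ext a
            simp only [Finset.mem_union, Finset.mem_insert]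
            constructor
            · rintro (h | h)
              · rcases h with rfl | h
                · exact Or.inr hxB
                · exact Or.inl h
              · exact Or.inr h
            · tauto
          have hsd : B \ insert x A = (B \ A).erase x := by
            ext a
            simp only [Finset.mem_sdiff, Finset.mem_insert, Finset.mem_erase]
            tauto
          have hcard : (B \ insert x A).card ≤ n := by
            rw [hsd, Finset.card_erase_of_mem hx]
            omega
          have := ih (insert x A) hins hcard
          rwa [heq] at this
    · -- (2) → (1)
      intro h2 A hA B hB hBA
      suffices key : ∀ n (B : Finset E), B ∈ F → ¬ B ⊆ A → B.card ≤ n →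
          ∃ x ∈ B \ A, insert x A ∈ F by
        exact key _ B hB hBA le_rfl
      intro n
      induction n with
      | zero =>
        intro B hB hBA h
        have hB0 : B = ∅ := Finset.card_eq_zero.mp (Nat.le_zero.mp h)
        subst hB0
        exact absurd (Finset.empty_subset A) hBA
      | succ n ih =>
        intro B hB hBA hle
        have hBne : B ≠ ∅ := by rintro rfl; exact hBA (Finset.empty_subset A)
        obtain ⟨z, hz, hB'⟩ := hacc B hB hBne
        by_cases hsub : B.erase z ⊆ A
        · have hzA : z ∉ A := by
            intro hzA
            apply hBA
            intro b hb
            by_cases hbz : b = z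
            · exact hbz ▸ hzA
            · exact hsub (Finset.mem_erase.mpr ⟨hbz, hb⟩)
          refine ⟨z, Finset.mem_sdiff.mpr ⟨hz, hzA⟩, ?_⟩
          have heq : insert z A = A ∪ B := by
            ext b
            simp only [Finset.mem_insert, Finset.mem_union]
            constructor
            · rintro (rfl | h)
              · exact Or.inr hz
              · exact Or.inl h
            · rintro (h | h)
              · exact Or.inr h
              · by_cases hbz : b = z
                · exact Or.inl hbz
                · exact Or.inr (hsub (Finset.mem_erase.mpr ⟨hbz, h⟩))
          rw [heq]; exact h2 A hA B hB
        · have hcard : (B.erase z).card ≤ n := by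
            have := Finset.card_erase_add_one hz
            omega
          obtain ⟨x, hx, hxF⟩ := ih (B.erase z) hB' hsub hcard
          obtain ⟨hxB, hxA⟩ := Finset.mem_sdiff.mp hx
          exact ⟨x, Finset.mem_sdiff.mpr ⟨Finset.mem_of_mem_erase hxB, hxA⟩, hxF⟩
  · constructor
    · -- (2) → (3)
      intro h2 A x y hA hx hy
      have h := h2 _ hx _ hy
      have heq : insert x A ∪ insert y A = insert x (insert y A) := by
        ext a
        simp only [Finset.mem_union, Finset.mem_insert]
        tauto
      rwa [heq] at h
    · -- (3) → (2)
      intro h3 A hA B hB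
      exact (antimatroid_aux3 F hacc h3 (A.card + B.card) A B hA hB le_rfl).1
end

section
/- Let (W,S) be a Coxeter system, ω = (ω_1,...,ω_m) a word in S, and α a subword of ω. Then the output sort_ω(α) of the ω-sorting algorithm is a reduced word for the group element ⟨α⟩ = α_1···α_k ∈ W. -/
/-!
Scanning `ω` from the left, the algorithm keeps the invariant that the current element `x` is
the product of a subword of the unread suffix of `ω`. When the next letter `s` is a left descent
of `x`, the exchange property for possibly non-reduced words gives a subword of the rest of the
suffix with product `s x`; when it is not, but the subword uses this letter, the same property
applied to `s x` removes it. At the end `x = 1`, and every recorded letter lowered the length by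
one, so the recorded letters form a reduced word for `u`.

The exchange property for arbitrary words comes from Tits' permutations
`(t, ε) ↦ (s t s, ε + [t = s])` of `W × ℤ/2`: they satisfy the Coxeter relations, so the parity of
the number of occurrences of `t` in the left inversion sequence of a word depends only on its
product. A left descent `s` of `π β` occurs once in the left inversion sequence of a reduced word
starting with `s`, hence also in that of `β`, and deleting the corresponding letter of `β`
multiplies `π β` by `s`.
-/

namespace SortingPaper

variable {B : Type*} {M : CoxeterMatrix B} {W : Type*} [Group W]

/-- The subword of `ω` with index set `A` (0-based indices). -/
def subword (ω : List B) (A : Finset ℕ) : List B :=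
  (A.sort (· ≤ ·)).filterMap (fun i => ω[i]?)

/-- Lexicographic comparison of index sets: `A ≤lex C` iff `A = C` or the minimum
element of the symmetric difference belongs to `A`. -/
def lexLE (A C : Finset ℕ) : Prop :=
  A = C ∨ ∃ k, k ∈ A ∧ k ∉ C ∧ ∀ j < k, (j ∈ A ↔ j ∈ C)

/-- `A` is the index set of an ω-sorted word: the corresponding subword is reduced, and
`A` is lexicographically least among index sets of reduced subwords of `ω` with the
same product in `W`. -/
def IsSorted (cs : CoxeterSystem M W) (ω : List B) (A : Finset ℕ) : Prop :=
  A ⊆ Finset.range ω.length ∧ cs.IsReduced (subword ω A) ∧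
  ∀ C ⊆ Finset.range ω.length, cs.IsReduced (subword ω C) →
    cs.wordProd (subword ω C) = cs.wordProd (subword ω A) → lexLE A C

/-- The ω-sorting algorithm (auxiliary): scan the word, recording positions that are
left descents of the current element. -/
noncomputable def sortAux (cs : CoxeterSystem M W) : List B → ℕ → W → Finset ℕ
  | [], _, _ => ∅
  | s :: rest, i, x =>
    if cs.length (cs.simple s * x) < cs.length x then
      insert i (sortAux cs rest (i + 1) (cs.simple s * x))
    else sortAux cs rest (i + 1) x

/-- The index set produced by the ω-sorting algorithm applied to `u ∈ W`. -/
noncomputable def sortIdx (cs : CoxeterSystem M W) (ω : List B) (u : W) : Finset ℕ :=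
  sortAux cs ω 0 u

end SortingPaper

namespace CoxeterSystem

open List

variable {B : Type*} {M : CoxeterMatrix B} {W : Type*} [Group W] (cs : CoxeterSystem M W)

local prefix:100 "s " => cs.simple
local prefix:100 "π " => cs.wordProd
local prefix:100 "lis " => cs.leftInvSeq

open scoped Classical

theorem conj_simple_eq_simple_iff (i : B) (t : W) : MulAut.conj (s i) t = s i ↔ t = s i := by
  constructor
  · intro h
    simpa [mul_assoc] using congrArg (MulAut.conj (s i)) h
  · rintro rfl
    simp

/-- Only pairs `(t, ε)` with `t` a reflection matter; defining the permutation on all of `W`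
avoids carrying that predicate around. -/
noncomputable def signedConj (i : B) : Equiv.Perm (W × ZMod 2) :=
  Function.Involutive.toPerm
    (fun z => (MulAut.conj (s i) z.1, z.2 + if z.1 = s i then 1 else 0)) <| by
      rintro ⟨t, e⟩
      simp only [conj_simple_eq_simple_iff, add_assoc, CharTwo.add_self_eq_zero, add_zero]
      simp [mul_assoc]

theorem signedConj_apply (i : B) (t : W) (e : ZMod 2) :
    cs.signedConj i (t, e) = (MulAut.conj (s i) t, e + if t = s i then 1 else 0) := rfl

theorem prod_map_signedConj_apply (ω : List B) (t : W) (e : ZMod 2) :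
    (ω.map cs.signedConj).prod (t, e) =
      (MulAut.conj (π ω) t, e + (lis ω).count (MulAut.conj (π ω) t)) := by
  induction ω with
  | nil => simp
  | cons i ω ih =>
    rw [map_cons, prod_cons, Equiv.Perm.mul_apply, ih]
    simp only [signedConj_apply, wordProd_cons, map_mul,
      MulAut.mul_apply, leftInvSeq, count_cons,
      count_map_of_injective _ _ (MulAut.conj (s i)).injective, beq_iff_eq, eq_comm (a := s i),
      conj_simple_eq_simple_iff, Nat.cast_add, Nat.cast_ite, Nat.cast_one, Nat.cast_zero, add_assoc]

theorem prod_map_alternatingWord_two_mul {G : Type*} [Monoid G] (f : B → G) (i j : B) (k : ℕ) :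
    ((alternatingWord i j (2 * k)).map f).prod = (f i * f j) ^ k := by
  induction k with
  | zero => simp [alternatingWord]
  | succ k ih =>
    rw [mul_add, mul_one, alternatingWord_succ', alternatingWord_succ']
    simp [ih, pow_succ', mul_assoc]

theorem even_count_leftInvSeq_alternatingWord (i j : B) (t : W) :
    Even ((lis (alternatingWord i j (2 * M i j))).count t) := by
  set l := lis (alternatingWord i j (2 * M i j))
  have hperiodic : l.drop (M i j) = l.take (M i j) := by
    refine ext_getElem (by simp [l]; omega) fun k h₁ h₂ => ?_
    simp only [getElem_drop, getElem_take, l]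
    rw [getElem_leftInvSeq_alternatingWord _ _ _ _ _ (by simp [l] at h₁; omega),
      getElem_leftInvSeq_alternatingWord _ _ _ _ _ (by simp [l] at h₂; omega),
      prod_alternatingWord_eq_mul_pow, prod_alternatingWord_eq_mul_pow]
    simp [Nat.mul_add_div, pow_add]
  rw [← take_append_drop (M i j) l, count_append, hperiodic]
  exact ⟨_, rfl⟩

theorem isLiftable_signedConj : M.IsLiftable cs.signedConj := by
  intro i j
  ext ⟨t, e⟩ : 1
  rw [← prod_map_alternatingWord_two_mul, prod_map_signedConj_apply,
    prod_alternatingWord_eq_mul_pow]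
  simp [ZMod.natCast_eq_zero_iff_even.2 (cs.even_count_leftInvSeq_alternatingWord i j t)]

theorem prod_map_signedConj_eq_lift (ω : List B) :
    (ω.map cs.signedConj).prod = cs.lift ⟨cs.signedConj, cs.isLiftable_signedConj⟩ (π ω) := by
  rw [wordProd, map_list_prod, map_map]
  congr 2
  ext i : 1
  exact (cs.lift_apply_simple cs.isLiftable_signedConj i).symm

theorem natCast_count_leftInvSeq_eq_of_wordProd_eq {ω ω' : List B} (h : π ω = π ω') (t : W) :
    ((lis ω).count t : ZMod 2) = (lis ω').count t := by
  have key := congrArg (fun f : Equiv.Perm (W × ZMod 2) => (f (MulAut.conj (π ω)⁻¹ t, 0)).2)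
    ((cs.prod_map_signedConj_eq_lift ω).trans (h ▸ (cs.prod_map_signedConj_eq_lift ω').symm))
  simpa [prod_map_signedConj_apply, h, mul_assoc] using key

theorem isReduced_cons {ω : List B} {i : B} (hω : cs.IsReduced ω)
    (hi : ¬cs.IsLeftDescent (π ω) i) : cs.IsReduced (i :: ω) := by
  rw [IsReduced, wordProd_cons, cs.not_isLeftDescent_iff.1 hi, hω.eq, length_cons]

theorem simple_mem_leftInvSeq_of_isLeftDescent {β : List B} {i : B}
    (h : cs.IsLeftDescent (π β) i) : s i ∈ lis β := by
  obtain ⟨γ, hγ, hγπ⟩ := cs.exists_isReduced (s i * π β)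
  have hiγ : π (i :: γ) = π β := by rw [wordProd_cons, ← hγπ, simple_mul_simple_cancel_left]
  have hred : cs.IsReduced (i :: γ) :=
    cs.isReduced_cons hγ (by rwa [← hγπ, ← isLeftDescent_iff_not_isLeftDescent_mul])
  have hcount : (lis (i :: γ)).count (s i) = 1 :=
    count_eq_one_of_mem hred.nodup_leftInvSeq (mem_cons_self ..)
  have hodd := cs.natCast_count_leftInvSeq_eq_of_wordProd_eq hiγ (s i)
  rw [hcount, Nat.cast_one] at hodd
  by_contra hnot
  rw [count_eq_zero_of_not_mem hnot, Nat.cast_zero] at hodd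
  exact zero_ne_one hodd.symm

theorem exists_sublist_wordProd_eq_simple_mul {β : List B} {i : B}
    (h : cs.IsLeftDescent (π β) i) : ∃ γ, γ <+ β ∧ π γ = s i * π β := by
  obtain ⟨n, hn, hget⟩ := mem_iff_getElem.1 (cs.simple_mem_leftInvSeq_of_isLeftDescent h)
  refine ⟨β.eraseIdx n, eraseIdx_sublist β n, ?_⟩
  rw [← getD_leftInvSeq_mul_wordProd, getD_eq_getElem _ _ hn, hget]

theorem exists_sublist_tail_of_isLeftDescent {β l : List B} {i : B} (hβ : β <+ i :: l)
    (h : cs.IsLeftDescent (π β) i) : ∃ γ, γ <+ l ∧ π γ = s i * π β := by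
  cases hβ with
  | cons _ hβ =>
    obtain ⟨γ, hγ, hγπ⟩ := cs.exists_sublist_wordProd_eq_simple_mul h
    exact ⟨γ, hγ.trans hβ, hγπ⟩
  | cons_cons _ hβ => exact ⟨_, hβ, by rw [wordProd_cons, simple_mul_simple_cancel_left]⟩

theorem exists_sublist_tail_of_not_isLeftDescent {β l : List B} {i : B} (hβ : β <+ i :: l)
    (h : ¬cs.IsLeftDescent (π β) i) : ∃ γ, γ <+ l ∧ π γ = π β := by
  cases hβ with
  | cons _ hβ => exact ⟨β, hβ, rfl⟩
  | @cons_cons β _ _ hβ =>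
    rw [wordProd_cons, ← isLeftDescent_iff_not_isLeftDescent_mul] at h
    obtain ⟨γ, hγ, hγπ⟩ := cs.exists_sublist_wordProd_eq_simple_mul h
    exact ⟨γ, hγ.trans hβ, by rw [hγπ, wordProd_cons]⟩

end CoxeterSystem

namespace List

theorem filterMap_getElem?_cons_of_pos {α : Type*} (a : α) (l : List α) {is : List ℕ}
    (h : ∀ i ∈ is, 0 < i) : is.filterMap ((a :: l)[·]?) = (is.map (· - 1)).filterMap (l[·]?) := by
  rw [filterMap_map]
  refine filterMap_congr fun i hi => ?_
  obtain ⟨j, rfl⟩ := Nat.exists_eq_succ_of_ne_zero (h i hi).ne'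
  simp

theorem filterMap_getElem?_sublist {α : Type*} (l : List α) {is : List ℕ}
    (h : is.Pairwise (· < ·)) : is.filterMap (l[·]?) <+ l := by
  induction l generalizing is with
  | nil => simp
  | cons a l ih =>
    have htail : ∀ {js : List ℕ}, js.Pairwise (· < ·) → (∀ j ∈ js, 0 < j) →
        js.filterMap ((a :: l)[·]?) <+ l := fun hjs hpos => by
      rw [filterMap_getElem?_cons_of_pos a l hpos]
      exact ih (pairwise_map.2 (hjs.imp_of_mem fun hi _ hij => by have := hpos _ hi; omega))
    rcases is with _ | ⟨_ | k, is⟩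
    · simp
    · rw [pairwise_cons] at h
      simpa using (htail h.2 h.1).cons_cons a
    · refine (htail h fun j hj => ?_).cons a
      rcases mem_cons.1 hj with rfl | hj
      · omega
      · exact (rel_of_pairwise_cons h hj).trans' (Nat.succ_pos k)

end List

namespace SortingPaper

variable {B : Type*} {M : CoxeterMatrix B} {W : Type*} [Group W]

open List CoxeterSystem

theorem subword_sublist (ω : List B) (A : Finset ℕ) : subword ω A <+ ω :=
  filterMap_getElem?_sublist ω A.sortedLT_sort.pairwise

noncomputable def sortWord (cs : CoxeterSystem M W) : List B → W → List B
  | [], _ => []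
  | i :: rest, x =>
    if cs.length (cs.simple i * x) < cs.length x then
      i :: sortWord cs rest (cs.simple i * x)
    else sortWord cs rest x

theorem isReduced_sortWord_and_wordProd (cs : CoxeterSystem M W) {l β : List B} (hβ : β <+ l) :
    cs.IsReduced (sortWord cs l (cs.wordProd β)) ∧
      cs.wordProd (sortWord cs l (cs.wordProd β)) = cs.wordProd β := by
  induction l generalizing β with
  | nil =>
    obtain rfl := sublist_nil.1 hβ
    simp [sortWord, CoxeterSystem.IsReduced]
  | cons i l ih =>
    by_cases h : cs.IsLeftDescent (cs.wordProd β) i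
    · obtain ⟨γ, hγ, hγπ⟩ := cs.exists_sublist_tail_of_isLeftDescent hβ h
      obtain ⟨hred, hprod⟩ := hγπ ▸ ih hγ
      have hsort : sortWord cs (i :: l) (cs.wordProd β) =
          i :: sortWord cs l (cs.simple i * cs.wordProd β) := if_pos h
      rw [hsort, wordProd_cons, hprod, simple_mul_simple_cancel_left]
      refine ⟨cs.isReduced_cons hred ?_, rfl⟩
      rwa [hprod, ← isLeftDescent_iff_not_isLeftDescent_mul]
    · obtain ⟨γ, hγ, hγπ⟩ := cs.exists_sublist_tail_of_not_isLeftDescent hβ h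
      have hsort : sortWord cs (i :: l) (cs.wordProd β) = sortWord cs l (cs.wordProd β) :=
        if_neg h
      rw [hsort, ← hγπ]
      exact ih hγ

theorem le_of_mem_sortAux (cs : CoxeterSystem M W) {l : List B} {n : ℕ} {x : W} {k : ℕ}
    (hk : k ∈ sortAux cs l n x) : n ≤ k := by
  induction l generalizing n x with
  | nil => simp [sortAux] at hk
  | cons i l ih =>
    rw [sortAux] at hk
    split_ifs at hk
    · rcases Finset.mem_insert.1 hk with rfl | hk
      · exact le_rfl
      · exact (ih hk).trans' n.le_succ
    · exact (ih hk).trans' n.le_succ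

theorem subword_sortAux (cs : CoxeterSystem M W) {ω l : List B} {n : ℕ} (x : W)
    (hl : ω.drop n = l) : subword ω (sortAux cs l n x) = sortWord cs l x := by
  induction l generalizing n x with
  | nil => simp [sortAux, sortWord, subword]
  | cons i l ih =>
    have hi : ω[n]? = some i := by rw [← Nat.add_zero n, ← getElem?_drop, hl]; rfl
    have hl' : ω.drop (n + 1) = l := by simpa using congrArg (drop 1) hl
    rw [sortAux, sortWord]
    split_ifs
    · have hgt : ∀ k ∈ sortAux cs l (n + 1) (cs.simple i * x), n < k := fun _ hk =>
        le_of_mem_sortAux cs hk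
      rw [subword, Finset.sort_insert (h₁ := fun k hk => (hgt k hk).le) (h₂ := fun hn => (hgt n hn).false),
        filterMap_cons, hi, ← subword, ih _ hl']
    · exact ih x hl'

theorem sortIdx_isReduced_and_prod_general (cs : CoxeterSystem M W) (ω : List B)
    (A : Finset ℕ) :
    cs.IsReduced (subword ω (sortIdx cs ω (cs.wordProd (subword ω A)))) ∧
    cs.wordProd (subword ω (sortIdx cs ω (cs.wordProd (subword ω A)))) =
      cs.wordProd (subword ω A) := by
  rw [sortIdx, subword_sortAux cs _ drop_zero]
  exact isReduced_sortWord_and_wordProd cs (subword_sublist ω A)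

/-- The output of the ω-sorting algorithm applied to the element
represented by a subword `α ⊆ ω` is a reduced word for that element. -/
theorem sortIdx_isReduced_and_prod (cs : CoxeterSystem M W) (ω : List B)
    (A : Finset ℕ) (hA : A ⊆ Finset.range ω.length) :
    cs.IsReduced (subword ω (sortIdx cs ω (cs.wordProd (subword ω A)))) ∧
    cs.wordProd (subword ω (sortIdx cs ω (cs.wordProd (subword ω A)))) =
      cs.wordProd (subword ω A) :=
  sortIdx_isReduced_and_prod_general cs ω A

end SortingPaper
end

section
/- Let (W,S) be a Coxeter system and ω = (ω_1,...,ω_m) a word in S. A subword α ⊆ ω is ω-sorted if and only if it is reduced and there does not exist an index 1 ≤ j < m with ω_j ∉ α (i.e., j ∉ I(α)) such that ω_j is a left descent of the group element ⟨α ∩ (ω_{j+1},...,ω_m)⟩, i.e., ℓ(ω_j · ⟨α ∩ (ω_{j+1},...,ω_m)⟩) < ℓ(⟨α ∩ (ω_{j+1},...,ω_m)⟩). -/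
/-!
Both directions compare `A` with an index set obtained by moving one letter. If `j ∉ A` and
`ω_j` is a left descent of `u = ⟨A ∩ (j, m]⟩`, the exchange property deletes one letter `k > j`
of that suffix, so `(A \ {k}) ∪ {j}` is a reduced subword with the same product that is
lexicographically smaller than `A`. Conversely, if a reduced `C` with the same product first
differs from `A` at some `j ∈ C \ A`, cancelling the common prefix gives
`s_{ω_j} ⟨C ∩ (j, m]⟩ = ⟨A ∩ (j, m]⟩` with the left side one letter shorter, so `ω_j` is a left
descent of `⟨A ∩ (j, m]⟩`.

The exchange property comes from Tits' permutation representation of `W` on `W × ZMod 2`: the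
parity of the number of occurrences of `t` in the left inversion sequence of a word depends only
on the product of the word, and for `t = s_i` it is odd as soon as `s_i` is a left descent.
-/

namespace SortingPaper

variable {B : Type*} {M : CoxeterMatrix B} {W : Type*} [Group W]

section Subword

open List

theorem _root_.List.filterMap_eraseIdx_of_isSome {α β : Type*} {f : α → Option β} {l : List α}
    (hf : ∀ x ∈ l, (f x).isSome) (n : ℕ) :
    (l.eraseIdx n).filterMap f = (l.filterMap f).eraseIdx n := by
  induction l generalizing n with
  | nil => simp
  | cons a l ih =>
    obtain ⟨b, hb⟩ := Option.isSome_iff_exists.mp (hf a mem_cons_self)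
    cases n with
    | zero => simp [hb]
    | succ n => simp [hb, ih (fun x hx => hf x (mem_cons_of_mem a hx))]

theorem _root_.Finset.sort_union_of_forall_lt {A C : Finset ℕ} (h : ∀ a ∈ A, ∀ c ∈ C, a < c) :
    (A ∪ C).sort = A.sort ++ C.sort := by
  refine SortedLT.eq_of_mem_iff (Finset.sortedLT_sort _) ?_ (by simp)
  rw [sortedLT_iff_pairwise, pairwise_append]
  exact ⟨(Finset.sortedLT_sort _).pairwise, (Finset.sortedLT_sort _).pairwise, by simpa using h⟩

theorem _root_.Finset.sort_erase (A : Finset ℕ) (k : ℕ) : (A.erase k).sort = A.sort.erase k := by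
  refine SortedLT.eq_of_mem_iff (Finset.sortedLT_sort _) ?_ ?_
  · exact ((Finset.sortedLT_sort A).pairwise.sublist erase_sublist).sortedLT
  · simp [(Finset.sort_nodup A _).mem_erase_iff]

theorem subword_union_of_forall_lt (ω : List B) {A C : Finset ℕ}
    (h : ∀ a ∈ A, ∀ c ∈ C, a < c) : subword ω (A ∪ C) = subword ω A ++ subword ω C := by
  simp [subword, Finset.sort_union_of_forall_lt h]

theorem subword_singleton {ω : List B} {j : ℕ} (hj : j < ω.length) : subword ω {j} = [ω[j]] := by
  simp [subword, hj]

theorem length_subword {ω : List B} {A : Finset ℕ} (hA : A ⊆ Finset.range ω.length) :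
    (subword ω A).length = A.sort.length := by
  refine filterMap_length_eq_length.mpr fun i hi => ?_
  simpa using hA ((Finset.mem_sort _).mp hi)

theorem subword_erase_getElem_sort {ω : List B} {A : Finset ℕ} (hA : A ⊆ Finset.range ω.length)
    {n : ℕ} (hn : n < A.sort.length) :
    subword ω (A.erase A.sort[n]) = (subword ω A).eraseIdx n := by
  rw [subword, Finset.sort_erase, (Finset.sort_nodup A _).erase_getElem,
    List.filterMap_eraseIdx_of_isSome, subword]
  intro i hi
  simpa using hA ((Finset.mem_sort _).mp hi)

theorem subword_eq_append_of_notMem (ω : List B) {A : Finset ℕ} {j : ℕ} (hjA : j ∉ A) :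
    subword ω A = subword ω (A.filter (· < j)) ++ subword ω (A.filter (j < ·)) := by
  rw [← subword_union_of_forall_lt ω (by simp; omega)]
  congr 1
  ext i
  grind

theorem subword_eq_append_cons_of_mem {ω : List B} {A : Finset ℕ} {j : ℕ} (hj : j < ω.length)
    (hjA : j ∈ A) :
    subword ω A = subword ω (A.filter (· < j)) ++ ω[j] :: subword ω (A.filter (j < ·)) := by
  rw [← singleton_append, ← subword_singleton hj, ← subword_union_of_forall_lt ω (by simp),
    ← subword_union_of_forall_lt ω (by grind)]
  congr 1
  ext i
  grind

end Subword

theorem exists_first_difference {A C : Finset ℕ} (h : A ≠ C) :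
    ∃ j, ¬(j ∈ A ↔ j ∈ C) ∧ ∀ i < j, (i ∈ A ↔ i ∈ C) := by
  have hex : ∃ j, ¬(j ∈ A ↔ j ∈ C) := by
    by_contra! hall
    exact h (Finset.ext hall)
  exact ⟨Nat.find hex, Nat.find_spec hex, fun i hi => not_not.mp (Nat.find_min hex hi)⟩

theorem lexLE_iff_of_first_difference {A C : Finset ℕ} {j : ℕ} (hj : ¬(j ∈ A ↔ j ∈ C))
    (hlt : ∀ i < j, (i ∈ A ↔ i ∈ C)) : lexLE A C ↔ j ∈ A := by
  constructor
  · rintro (rfl | ⟨k, hkA, hkC, hk⟩)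
    · exact absurd Iff.rfl hj
    · rcases lt_trichotomy k j with hkj | rfl | hjk
      · exact absurd ((hlt k hkj).mp hkA) hkC
      · exact hkA
      · exact absurd (hk j hjk) hj
  · intro hjA
    exact Or.inr ⟨j, hjA, fun hjC => hj (iff_of_true hjA hjC), hlt⟩

section Exchange

open List CoxeterSystem

variable (cs : CoxeterSystem M W)

local prefix:100 "s" => cs.simple
local prefix:100 "π" => cs.wordProd
local prefix:100 "lis" => cs.leftInvSeq

theorem conj_simple_conj_simple (i : B) (t : W) :
    MulAut.conj (s i) (MulAut.conj (s i) t) = t := by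
  simp [mul_assoc]

theorem conj_simple_eq_simple_iff (i : B) (t : W) :
    MulAut.conj (s i) t = s i ↔ t = s i := by
  rw [← (MulAut.conj (s i)).injective.eq_iff, conj_simple_conj_simple]
  simp

section PermRep

variable [DecidableEq W]

/-- `W × ZMod 2` stands in for Tits' set `T × {±1}` of signed reflections. -/
noncomputable def simplePerm (i : B) : Equiv.Perm (W × ZMod 2) :=
  Function.Involutive.toPerm
    (fun p => (MulAut.conj (s i) p.1, p.2 + if p.1 = s i then 1 else 0)) fun ⟨t, ε⟩ => by
      by_cases ht : t = s i <;>
        simp only [conj_simple_conj_simple, conj_simple_eq_simple_iff, ht, if_true, if_false,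
          add_assoc, CharTwo.add_self_eq_zero, add_zero]

@[simp]
theorem simplePerm_apply (i : B) (t : W) (ε : ZMod 2) :
    simplePerm cs i (t, ε) = (MulAut.conj (s i) t, ε + if t = s i then 1 else 0) :=
  rfl

theorem prod_map_simplePerm_apply (ω : List B) (t : W) (ε : ZMod 2) :
    (ω.map (simplePerm cs)).prod (t, ε) =
      (MulAut.conj (π ω) t, ε + ((lis ω).count (MulAut.conj (π ω) t) : ZMod 2)) := by
  induction ω generalizing t ε with
  | nil => simp
  | cons i ω ih =>
    rw [map_cons, prod_cons, Equiv.Perm.mul_apply, ih]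
    simp only [simplePerm_apply, wordProd_cons, map_mul, MulAut.mul_apply, Prod.mk.injEq,
      true_and]
    show _ = ε + ((count _ (s i :: map (MulAut.conj (s i)) (lis ω)) : ℕ) : ZMod 2)
    rw [count_cons, count_map_of_injective _ _ (MulAut.conj (s i)).injective]
    simp only [beq_iff_eq, @eq_comm _ (s i), conj_simple_eq_simple_iff]
    push_cast
    ring

theorem prod_map_alternatingWord {G : Type*} [Monoid G] (f : B → G) (i j : B) (m : ℕ) :
    ((alternatingWord i j (2 * m)).map f).prod = (f i * f j) ^ m := by
  induction m with
  | zero => simp [alternatingWord]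
  | succ m ih =>
    rw [show 2 * (m + 1) = 2 * m + 1 + 1 by ring, alternatingWord_succ', alternatingWord_succ']
    simp [ih, pow_succ', mul_assoc]

theorem count_leftInvSeq_alternatingWord (i j : B) (t : W) :
    ((lis (alternatingWord i j (2 * M i j))).count t : ZMod 2) = 0 := by
  -- the `k`-th and `(k + M i j)`-th entries agree, so each reflection occurs an even number
  -- of times
  set L := lis (alternatingWord i j (2 * M i j))
  have hlen : L.length = 2 * M i j := by simp [L]
  have hentry (k : ℕ) (hk : k < 2 * M i j) :
      L[k]'(by omega) = s i * (s j * s i) ^ k := by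
    rw [getElem_leftInvSeq_alternatingWord cs i j (M i j) k hk, prod_alternatingWord_eq_mul_pow]
    simp [Nat.not_even_bit1, Nat.mul_add_div]
  have hhalf : L.drop (M i j) = L.take (M i j) := by
    apply List.ext_getElem (by simp [hlen]; omega)
    intro k h1 h2
    simp only [getElem_drop, getElem_take]
    rw [hentry, hentry, pow_add, cs.simple_mul_simple_pow', one_mul]
    all_goals simp at h1 h2; omega
  rw [← take_append_drop (M i j) L, hhalf, count_append, ← two_mul, Nat.cast_mul,
    show ((2 : ℕ) : ZMod 2) = 0 from rfl, zero_mul]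

theorem isLiftable_simplePerm : M.IsLiftable (simplePerm cs) := by
  intro i j
  ext ⟨t, ε⟩ : 1
  rw [← prod_map_alternatingWord, prod_map_simplePerm_apply, prod_alternatingWord_eq_mul_pow]
  simp [cs.simple_mul_simple_pow, count_leftInvSeq_alternatingWord]

noncomputable def permRep : W →* Equiv.Perm (W × ZMod 2) :=
  cs.lift ⟨simplePerm cs, isLiftable_simplePerm cs⟩

theorem permRep_wordProd (ω : List B) : permRep cs (π ω) = (ω.map (simplePerm cs)).prod := by
  simp [permRep, wordProd, map_list_prod, Function.comp_def]

theorem count_leftInvSeq_eq_of_wordProd_eq {ω ω' : List B} (h : π ω = π ω') (t : W) :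
    ((lis ω).count t : ZMod 2) = (lis ω').count t := by
  have := congrArg (fun f => (f (MulAut.conj (π ω)⁻¹ t, 0)).2)
    ((permRep_wordProd cs ω).symm.trans ((congrArg _ h).trans (permRep_wordProd cs ω')))
  simpa [prod_map_simplePerm_apply, h, mul_assoc] using this

theorem simple_mem_leftInvSeq_of_isLeftDescent {ω : List B} {i : B}
    (h : cs.IsLeftDescent (π ω) i) : s i ∈ lis ω := by
  obtain ⟨σ, hσ, hσω⟩ := cs.exists_isReduced (s i * π ω)
  have hprod : π (i :: σ) = π ω := by
    rw [wordProd_cons, ← hσω, cs.simple_mul_simple_cancel_left]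
  have hnotMem : s i ∉ lis σ := fun hmem => by
    have := (cs.isLeftInversion_of_mem_leftInvSeq hσ hmem).2
    rw [← hσω, cs.simple_mul_simple_cancel_left] at this
    exact lt_asymm this h
  have hnotMem' : s i ∉ map (MulAut.conj (s i)) (lis σ) := fun hmem => by
    obtain ⟨x, hx, hxi⟩ := mem_map.mp hmem
    rw [conj_simple_eq_simple_iff] at hxi
    exact hnotMem (hxi ▸ hx)
  have hcount : ((lis ω).count (s i) : ZMod 2) = 1 := by
    rw [← count_leftInvSeq_eq_of_wordProd_eq cs hprod]
    show ((count (s i) (s i :: map (MulAut.conj (s i)) (lis σ)) : ℕ) : ZMod 2) = 1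
    simp [count_eq_zero_of_not_mem hnotMem']
  by_contra hnot
  simp [count_eq_zero_of_not_mem hnot] at hcount

end PermRep

theorem exists_eraseIdx_of_isLeftDescent {ω : List B} {i : B}
    (h : cs.IsLeftDescent (π ω) i) : ∃ n < ω.length, s i * π ω = π (ω.eraseIdx n) := by
  classical
  obtain ⟨n, hn, hget⟩ := List.mem_iff_getElem.mp (simple_mem_leftInvSeq_of_isLeftDescent cs h)
  rw [length_leftInvSeq] at hn
  refine ⟨n, hn, ?_⟩
  rw [← getD_leftInvSeq_mul_wordProd, getD_eq_getElem _ _ (by simpa using hn), hget]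

end Exchange

section Sorting

open CoxeterSystem

variable (cs : CoxeterSystem M W)

local prefix:100 "s" => cs.simple
local prefix:100 "π" => cs.wordProd
local prefix:100 "ℓ" => cs.length

theorem _root_.CoxeterSystem.IsReduced.of_append_right {cs : CoxeterSystem M W}
    {ω ω' : List B} (h : cs.IsReduced (ω ++ ω')) : cs.IsReduced ω' := by
  simpa using h.drop ω.length

theorem exists_subword_erase_of_isLeftDescent {ω : List B} {A : Finset ℕ}
    (hA : A ⊆ Finset.range ω.length) {i : B} (h : cs.IsLeftDescent (π (subword ω A)) i) :
    ∃ k ∈ A, s i * π (subword ω A) = π (subword ω (A.erase k)) ∧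
      (subword ω (A.erase k)).length + 1 = (subword ω A).length := by
  obtain ⟨n, hn, hprod⟩ := exists_eraseIdx_of_isLeftDescent cs h
  have hn' : n < A.sort.length := length_subword hA ▸ hn
  refine ⟨A.sort[n], (Finset.mem_sort _).mp (List.getElem_mem hn'), ?_, ?_⟩
  · rw [subword_erase_getElem_sort hA hn', hprod]
  · rw [subword_erase_getElem_sort hA hn', List.length_eraseIdx_of_lt hn]
    omega

theorem exists_not_lexLE_of_isLeftDescent {ω : List B} {A : Finset ℕ}
    (hA : A ⊆ Finset.range ω.length) (hred : cs.IsReduced (subword ω A)) {j : ℕ}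
    (hj : j < ω.length) (hjA : j ∉ A)
    (h : cs.IsLeftDescent (π (subword ω (A.filter (j < ·)))) ω[j]) :
    ∃ C ⊆ Finset.range ω.length, cs.IsReduced (subword ω C) ∧
      π (subword ω C) = π (subword ω A) ∧ ¬ lexLE A C := by
  obtain ⟨k, hk, hprod, hlen⟩ :=
    exists_subword_erase_of_isLeftDescent cs (fun x hx => hA (Finset.mem_filter.mp hx).1) h
  have hjk : j < k := (Finset.mem_filter.mp hk).2
  set C := insert j (A.erase k)
  have hsplitC := subword_eq_append_cons_of_mem hj (Finset.mem_insert_self j (A.erase k))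
  have hsplitA := subword_eq_append_of_notMem ω hjA
  have hC_lt : C.filter (· < j) = A.filter (· < j) := by ext; grind
  have hC_gt : C.filter (j < ·) = (A.filter (j < ·)).erase k := by ext; grind
  rw [hC_lt, hC_gt] at hsplitC
  have hprodC : π (subword ω C) = π (subword ω A) := by
    rw [hsplitC, hsplitA, wordProd_append, wordProd_append, wordProd_cons, ← hprod,
      cs.simple_mul_simple_cancel_left]
  have hlenC : (subword ω C).length = (subword ω A).length := by
    rw [hsplitC, hsplitA, List.length_append, List.length_append, List.length_cons, ← hlen]
  refine ⟨C, ?_, ?_, hprodC, ?_⟩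
  · intro x hx
    rcases Finset.mem_insert.mp hx with rfl | hx
    · exact Finset.mem_range.mpr hj
    · exact hA (Finset.mem_of_mem_erase hx)
  · show ℓ (π (subword ω C)) = (subword ω C).length
    rw [hprodC, hlenC]
    exact hred
  · rw [lexLE_iff_of_first_difference (j := j) (by simp [C, hjA]) (by grind)]
    exact hjA

theorem IsSorted.not_isLeftDescent {ω : List B} {A : Finset ℕ} (hS : IsSorted cs ω A) {j : ℕ}
    (hj : j < ω.length) (hjA : j ∉ A) :
    ¬ cs.IsLeftDescent (π (subword ω (A.filter (j < ·)))) ω[j] := fun h =>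
  let ⟨C, hC, hCred, hCprod, hlex⟩ := exists_not_lexLE_of_isLeftDescent cs hS.1 hS.2.1 hj hjA h
  hlex (hS.2.2 C hC hCred hCprod)

theorem isLeftDescent_of_first_difference {ω : List B} {A C : Finset ℕ}
    (hred : cs.IsReduced (subword ω A)) (hCred : cs.IsReduced (subword ω C))
    (hprod : π (subword ω C) = π (subword ω A)) {j : ℕ} (hj : j < ω.length) (hjA : j ∉ A)
    (hjC : j ∈ C) (hlt : ∀ i < j, (i ∈ A ↔ i ∈ C)) :
    cs.IsLeftDescent (π (subword ω (A.filter (j < ·)))) ω[j] := by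
  have hsplitA := subword_eq_append_of_notMem ω hjA
  have hsplitC := subword_eq_append_cons_of_mem hj hjC
  have hC_lt : C.filter (· < j) = A.filter (· < j) := by ext; grind
  rw [hC_lt] at hsplitC
  set u := subword ω (A.filter (· < j))
  set a := subword ω (A.filter (j < ·))
  set c := subword ω (C.filter (j < ·))
  have hred_a : cs.IsReduced a := (hsplitA ▸ hred).of_append_right
  have hred_c : cs.IsReduced c :=
    IsReduced.of_append_right (ω := [ω[j]]) (hsplitC ▸ hCred).of_append_right
  have hmul : s ω[j] * π c = π a := by
    rw [hsplitA, hsplitC, wordProd_append, wordProd_append, wordProd_cons] at hprod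
    exact mul_left_cancel hprod
  have hlen : c.length + 1 = a.length := by
    have := hred.eq
    rw [← hprod, hCred.eq, hsplitA, hsplitC] at this
    simp only [List.length_append, List.length_cons] at this
    omega
  show ℓ (s ω[j] * π a) < ℓ (π a)
  rw [← hmul, cs.simple_mul_simple_cancel_left, hmul, hred_a.eq, hred_c.eq]
  omega

theorem succ_lt_length_of_isLeftDescent {ω : List B} {A : Finset ℕ}
    (hA : A ⊆ Finset.range ω.length) {j : ℕ} {i : B}
    (h : cs.IsLeftDescent (π (subword ω (A.filter (j < ·)))) i) : j + 1 < ω.length := by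
  obtain ⟨a, ha⟩ : (A.filter (j < ·)).Nonempty := by
    by_contra hempty
    rw [Finset.not_nonempty_iff_eq_empty.mp hempty] at h
    exact cs.not_isLeftDescent_one i (by simpa [subword] using h)
  have := Finset.mem_range.mp (hA (Finset.mem_filter.mp ha).1)
  have := (Finset.mem_filter.mp ha).2
  omega

end Sorting

/-- a subword `α ⊆ ω` is ω-sorted iff it is reduced and there is no
position `j` outside of `α` (with `j` not the last position) such that `ω_j` is a left
descent of the product of the part of `α` strictly after position `j`. -/
theorem isSorted_iff_no_descent (cs : CoxeterSystem M W) (ω : List B)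
    (A : Finset ℕ) (hA : A ⊆ Finset.range ω.length) :
    IsSorted cs ω A ↔
      (cs.IsReduced (subword ω A) ∧
        ¬ ∃ j, ∃ (hj : j + 1 < ω.length), j ∉ A ∧
          cs.length (cs.simple (ω.get ⟨j, Nat.lt_of_succ_lt hj⟩) *
              cs.wordProd (subword ω (A.filter (fun i => j < i)))) <
            cs.length (cs.wordProd (subword ω (A.filter (fun i => j < i))))) := by
  constructor
  · intro hS
    refine ⟨hS.2.1, ?_⟩
    rintro ⟨j, hj, hjA, h⟩
    exact hS.not_isLeftDescent cs (Nat.lt_of_succ_lt hj) hjA h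
  · rintro ⟨hred, hno⟩
    refine ⟨hA, hred, fun C hC hCred hprod => ?_⟩
    by_cases hAC : A = C
    · exact Or.inl hAC
    obtain ⟨j, hdiff, hlt⟩ := exists_first_difference hAC
    rw [lexLE_iff_of_first_difference hdiff hlt]
    by_contra hjA
    have hjC : j ∈ C := by tauto
    have hj : j < ω.length := Finset.mem_range.mp (hC hjC)
    have h := isLeftDescent_of_first_difference cs hred hCred hprod hj hjA hjC hlt
    exact hno ⟨j, succ_lt_length_of_isLeftDescent cs hA h, hjA, h⟩

end SortingPaper
end

section
/- Let (W,S) be a Coxeter system, ω a word in S, and u, w ∈ W_ω. If u ≤_ω w in the ω-sorting order, then u ≤_B w in Bruhat order. Moreover, on the full group of a finite Coxeter system with ω a reduced word for the longest element, both containments weak ⊆ sorting ⊆ Bruhat can be strict. -/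
/-!
Sorted index sets `A ⊆ C` give a subword `subword ω A` of the reduced word `subword ω C`, and
both are reduced: this is the subword criterion for Bruhat order.

For strictness take `A₂ = S₃` with `ω = s t s`. Here `t ≤_ω s t` (sorted index sets
`{1} ⊆ {0, 1}`), but `t` is not a weak prefix of `s t`, since `t⁻¹ (s t) = s t s` is longer
than `s t`. And `s ≤_B t s`, while the sorted index sets `{0}` of `s` and `{1, 2}` of `t s`
are not nested. Subword products are told apart in the permutation representation on three
letters, where two index sets give the same element only if they differ by exchanging the two
letters `s`.
-/

namespace SortingPaper

variable {B : Type*} {M : CoxeterMatrix B} {W : Type*} [Group W]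

/-- Bruhat order: `u ≤_B w` iff some reduced word for `w` contains a reduced word
for `u` as a subword. -/
def bruhatLE (cs : CoxeterSystem M W) (u w : W) : Prop :=
  ∃ l : List B, cs.IsReduced l ∧ cs.wordProd l = w ∧
    ∃ l' : List B, l'.Sublist l ∧ cs.IsReduced l' ∧ cs.wordProd l' = u

/-- The ω-sorting order: `u ≤_ω w` iff the index set of the ω-sorted word of `u`
is contained in that of `w`. -/
def sortingLE (cs : CoxeterSystem M W) (ω : List B) (u w : W) : Prop :=
  ∃ A C : Finset ℕ, IsSorted cs ω A ∧ cs.wordProd (subword ω A) = u ∧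
    IsSorted cs ω C ∧ cs.wordProd (subword ω C) = w ∧ A ⊆ C

/-- Right weak order. -/
def weakLE (cs : CoxeterSystem M W) (u w : W) : Prop :=
  cs.length u + cs.length (u⁻¹ * w) = cs.length w

theorem sort_eq_filter_range {n : ℕ} {A : Finset ℕ} (hA : A ⊆ Finset.range n) :
    A.sort (· ≤ ·) = (List.range n).filter (· ∈ A) := by
  have hsub : ((List.range n).filter (· ∈ A)).Sublist (List.range n) := List.filter_sublist
  have hset : ((List.range n).filter (· ∈ A)).toFinset = A := by
    ext i
    simpa using fun h => Finset.mem_range.1 (hA h)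
  conv_lhs => rw [← hset]
  exact (List.toFinset_sort _ (hsub.nodup List.nodup_range)).2
    ((List.pairwise_lt_range.sublist hsub).imp le_of_lt)

section General

variable {cs : CoxeterSystem M W} {ω : List B}

-- Unlike `Finset.sort`, which the kernel cannot unfold, the right-hand side evaluates by `decide`.
theorem subword_eq_filterMap_range {A : Finset ℕ} (hA : A ⊆ Finset.range ω.length) :
    subword ω A = ((List.range ω.length).filter (· ∈ A)).filterMap (ω[·]?) := by
  rw [subword, sort_eq_filter_range hA]

theorem subword_sublist_subword {A C : Finset ℕ} (h : A ⊆ C) :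
    (subword ω A).Sublist (subword ω C) :=
  .filterMap _ <| List.sublist_of_subperm_of_pairwise
    ((A.sort_nodup _).subperm fun x hx => by simpa using h (by simpa using hx))
    (A.pairwise_sort _) (C.pairwise_sort _)

theorem lexLE_antisymm {A C : Finset ℕ} (hAC : lexLE A C) (hCA : lexLE C A) : A = C := by
  rcases hAC with rfl | ⟨k, hkA, hkC, hk⟩
  · rfl
  rcases hCA with rfl | ⟨k', hk'C, hk'A, hk'⟩
  · rfl
  rcases lt_trichotomy k k' with h | rfl | h
  · exact absurd ((hk' k h).2 hkA) hkC
  · exact absurd hk'C hkC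
  · exact absurd ((hk k' h).2 hk'C) hk'A

theorem IsSorted.eq_of_wordProd_eq {A C : Finset ℕ} (hA : IsSorted cs ω A)
    (hC : IsSorted cs ω C) (h : cs.wordProd (subword ω A) = cs.wordProd (subword ω C)) :
    A = C :=
  lexLE_antisymm (hA.2.2 C hC.1 hC.2.1 h.symm) (hC.2.2 A hA.1 hA.2.1 h)

theorem isSorted_of_forall_wordProd_eq {A : Finset ℕ} (hA : A ⊆ Finset.range ω.length)
    (hred : cs.IsReduced (subword ω A))
    (h : ∀ C ⊆ Finset.range ω.length,
      cs.wordProd (subword ω C) = cs.wordProd (subword ω A) → C = A) :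
    IsSorted cs ω A :=
  ⟨hA, hred, fun C hC _ hCA => .inl (h C hC hCA).symm⟩

theorem bruhatLE_of_sortingLE {u w : W} (h : sortingLE cs ω u w) : bruhatLE cs u w :=
  let ⟨_, _, hA, hAu, hC, hCw, hAC⟩ := h
  ⟨_, hC.2.1, hCw, _, subword_sublist_subword hAC, hA.2.1, hAu⟩

theorem length_simple_mul_simple_of_ne {i j : B} (h : cs.simple i ≠ cs.simple j) :
    cs.length (cs.simple i * cs.simple j) = 2 := by
  rcases cs.length_simple_mul (cs.simple j) i with h2 | h0
  · rwa [cs.length_simple] at h2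
  · rw [cs.length_simple, Nat.add_eq_right, cs.length_eq_zero_iff] at h0
    exact absurd (by rw [eq_inv_of_mul_eq_one_left h0, cs.inv_simple]) h

end General

namespace A2

open CoxeterSystem Equiv

abbrev G : Type := (CoxeterMatrix.A 2).Group

noncomputable def cs : CoxeterSystem (CoxeterMatrix.A 2) G := (CoxeterMatrix.A 2).toCoxeterSystem

noncomputable abbrev s : G := cs.simple 0
noncomputable abbrev t : G := cs.simple 1

abbrev ω : List (Fin 2) := [0, 1, 0]

def perm : Fin 2 → Perm (Fin 3) := ![swap 0 1, swap 1 2]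

theorem isLiftable_perm : (CoxeterMatrix.A 2).IsLiftable perm := by
  intro i j
  fin_cases i <;> fin_cases j <;> decide

noncomputable def toPerm : G →* Perm (Fin 3) := cs.lift ⟨perm, isLiftable_perm⟩

theorem toPerm_simple (i : Fin 2) : toPerm (cs.simple i) = perm i :=
  cs.lift_apply_simple isLiftable_perm i

theorem toPerm_wordProd (l : List (Fin 2)) : toPerm (cs.wordProd l) = (l.map perm).prod := by
  simp [wordProd, map_list_prod, Function.comp_def, toPerm_simple]

theorem ne_of_toPerm_ne {x y : G} (h : toPerm x ≠ toPerm y) : x ≠ y :=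
  mt (congrArg toPerm) h

theorem braid : t * (s * t) = s * (t * s) :=
  (cs.wordProd_braidWord_eq 1 0).symm

theorem mem_six_elements (x : G) : x ∈ ({1, s, t, s * t, t * s, s * (t * s)} : Set G) := by
  refine cs.simple_induction_left x (by simp) fun w i hw => ?_
  have tsts : t * (s * (t * s)) = s * t := by rw [← braid, cs.simple_mul_simple_cancel_left]
  simp only [Set.mem_insert_iff, Set.mem_singleton_iff] at hw ⊢
  fin_cases i <;> rcases hw with rfl | rfl | rfl | rfl | rfl | rfl <;> simp [braid, tsts]

instance : Finite G :=
  Set.finite_univ_iff.1 ((Set.toFinite _).subset fun x _ => mem_six_elements x)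

theorem length_st : cs.length (s * t) = 2 :=
  length_simple_mul_simple_of_ne (ne_of_toPerm_ne (by simp only [toPerm_simple]; decide))

theorem length_ts : cs.length (t * s) = 2 :=
  length_simple_mul_simple_of_ne (ne_of_toPerm_ne (by simp only [toPerm_simple]; decide))

theorem length_sts : cs.length (s * (t * s)) = 3 := by
  have h := cs.length_simple_mul (t * s) 0
  rw [length_ts] at h
  refine h.resolve_right fun h1 => ?_
  obtain ⟨i, hi⟩ := cs.length_eq_one_iff.1 (Nat.succ_injective h1)
  fin_cases i <;>
    exact absurd hi (ne_of_toPerm_ne (by simp only [map_mul, toPerm_simple]; decide))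

theorem wordProd_ω : cs.wordProd ω = s * (t * s) := by
  simp [wordProd]

theorem isReduced_ω : cs.IsReduced ω := by
  rw [CoxeterSystem.IsReduced, wordProd_ω, length_sts]
  rfl

theorem length_le_length_wordProd_ω (x : G) : cs.length x ≤ cs.length (cs.wordProd ω) := by
  rw [wordProd_ω]
  rcases mem_six_elements x with rfl | rfl | rfl | rfl | rfl | rfl <;>
    simp [length_st, length_ts, length_sts]

theorem subword_singleton_zero : subword ω {0} = [0] := by
  simp [subword]

theorem subword_singleton_one : subword ω {1} = [1] := by
  simp [subword]

theorem subword_zero_one : subword ω {0, 1} = [0, 1] := by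
  simp [subword, Finset.sort_insert]

theorem subword_one_two : subword ω {1, 2} = [1, 0] := by
  simp [subword, Finset.sort_insert]

theorem isReduced_singleton (i : Fin 2) : cs.IsReduced [i] := by
  simp [CoxeterSystem.IsReduced, wordProd]

theorem isReduced_zero_one : cs.IsReduced [0, 1] := by
  simpa [CoxeterSystem.IsReduced, wordProd] using length_st

theorem isReduced_one_zero : cs.IsReduced [1, 0] := by
  simpa [CoxeterSystem.IsReduced, wordProd] using length_ts

theorem eq_or_disjoint_of_wordProd_subword_eq {C D : Finset ℕ} (hC : C ⊆ Finset.range 3)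
    (hD : D ⊆ Finset.range 3) (h : cs.wordProd (subword ω C) = cs.wordProd (subword ω D)) :
    C = D ∨ Disjoint C D ∧ C ∪ D = {0, 2} := by
  have hperm := congrArg toPerm h
  rw [toPerm_wordProd, toPerm_wordProd, subword_eq_filterMap_range hC,
    subword_eq_filterMap_range hD] at hperm
  rw [← Finset.mem_powerset] at hC hD
  revert hperm
  fin_cases hC <;> fin_cases hD <;> decide

theorem eq_of_wordProd_subword_eq_of_one_mem {C D : Finset ℕ} (hC : C ⊆ Finset.range 3)
    (hD : D ⊆ Finset.range 3) (h1 : 1 ∈ D)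
    (h : cs.wordProd (subword ω C) = cs.wordProd (subword ω D)) : C = D :=
  (eq_or_disjoint_of_wordProd_subword_eq hC hD h).resolve_right fun ⟨_, hCD⟩ =>
    absurd (hCD ▸ Finset.mem_union_right C h1) (by decide)

theorem isSorted_of_one_mem {D : Finset ℕ} (hD : D ⊆ Finset.range 3) (h1 : 1 ∈ D)
    (hred : cs.IsReduced (subword ω D)) : IsSorted cs ω D :=
  isSorted_of_forall_wordProd_eq hD hred fun _ hC h =>
    eq_of_wordProd_subword_eq_of_one_mem hC hD h1 h

theorem isSorted_singleton_zero : IsSorted cs ω {0} := by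
  refine ⟨by decide, ?_, fun C hC _ h => ?_⟩
  · exact subword_singleton_zero ▸ isReduced_singleton 0
  rcases eq_or_disjoint_of_wordProd_subword_eq hC (by decide) h with rfl | ⟨hdisj, _⟩
  · exact .inl rfl
  · exact .inr ⟨0, Finset.mem_singleton_self 0, Finset.disjoint_singleton_right.1 hdisj,
      fun j hj => absurd hj j.not_lt_zero⟩

theorem sortingLE_t_st : sortingLE cs ω t (s * t) :=
  ⟨{1}, {0, 1},
    isSorted_of_one_mem (by decide) (by decide) (subword_singleton_one ▸ isReduced_singleton 1),
    by simp [subword_singleton_one, wordProd],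
    isSorted_of_one_mem (by decide) (by decide) (subword_zero_one ▸ isReduced_zero_one),
    by simp [subword_zero_one, wordProd], by decide⟩

theorem not_weakLE_t_st : ¬ weakLE cs t (s * t) := by
  rw [weakLE, cs.inv_simple, braid, length_sts, length_st, cs.length_simple]
  decide

theorem bruhatLE_s_ts : bruhatLE cs s (t * s) :=
  ⟨[1, 0], isReduced_one_zero, by simp [wordProd], [0], (List.Sublist.refl _).cons 1,
    isReduced_singleton 0, by simp [wordProd]⟩

theorem not_sortingLE_s_ts : ¬ sortingLE cs ω s (t * s) := by
  rintro ⟨A, C, hA, hAs, hC, hCts, hAC⟩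
  obtain rfl : A = {0} := hA.eq_of_wordProd_eq isSorted_singleton_zero
    (by rw [hAs, subword_singleton_zero]; simp [wordProd])
  obtain rfl : C = {1, 2} := eq_of_wordProd_subword_eq_of_one_mem hC.1 (by decide) (by decide)
    (by rw [hCts, subword_one_two]; simp [wordProd])
  exact absurd (hAC (Finset.mem_singleton_self 0)) (by decide)

end A2

/-- the ω-sorting order is extended by Bruhat order; moreover on a
finite Coxeter group with `ω` a reduced word for the longest element, both
containments weak ⊆ sorting ⊆ Bruhat can be strict. -/
theorem sorting_le_implies_bruhat_le :
    (∀ {B : Type} (M : CoxeterMatrix B) {W : Type} [Group W] (cs : CoxeterSystem M W)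
      (ω : List B) (u w : W), sortingLE cs ω u w → bruhatLE cs u w) ∧
    (∃ (B : Type) (M : CoxeterMatrix B) (W : Type) (instW : Group W)
      (cs : @CoxeterSystem B M W instW) (ω : List B),
      Finite W ∧ cs.IsReduced ω ∧
      (∀ v : W, cs.length v ≤ cs.length (cs.wordProd ω)) ∧
      (∃ u w : W, @sortingLE B M W instW cs ω u w ∧ ¬ @weakLE B M W instW cs u w) ∧
      (∃ u w : W, @bruhatLE B M W instW cs u w ∧ ¬ @sortingLE B M W instW cs ω u w)) := by
  exact ⟨fun _ _ _ _ _ _ _ => bruhatLE_of_sortingLE,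
    _, _, _, _, A2.cs, A2.ω, inferInstance, A2.isReduced_ω, A2.length_le_length_wordProd_ω,
    ⟨_, _, A2.sortingLE_t_st, A2.not_weakLE_t_st⟩,
    ⟨_, _, A2.bruhatLE_s_ts, A2.not_sortingLE_s_ts⟩⟩

end SortingPaper
end

section
/- Every finite supersolvable join-distributive lattice P is a maximal graded lattice: adding any finite nonempty collection of cover relations x ≺ y with rk(y) = rk(x) + 1 (where x, y are incomparable in P) to the order of P yields a partial order that is not a lattice. -/
namespace SortingPaper

/-- The order obtained from the inclusion order on the feasible sets `F` by adding the
cover relations in `pairs` (and taking the reflexive-transitive closure). -/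
def extOrder {E : Type*} [DecidableEq E] (F : Finset (Finset E))
    (pairs : Finset (Finset E × Finset E)) : Finset E → Finset E → Prop :=
  Relation.ReflTransGen (fun X Y => (X ∈ F ∧ Y ∈ F ∧ X ⊆ Y) ∨ (X, Y) ∈ pairs)

lemma extOrder_card_le {E : Type*} [DecidableEq E] {F : Finset (Finset E)}
    {pairs : Finset (Finset E × Finset E)}
    (hp : ∀ p ∈ pairs, p.1.card ≤ p.2.card) {X Y : Finset E}
    (h : extOrder F pairs X Y) : X.card ≤ Y.card := by
  induction h with
  | refl => exact le_refl _
  | tail _ h2 ih =>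
    rcases h2 with h2 | h2
    · exact ih.trans (Finset.card_le_card h2.2.2)
    · exact ih.trans (hp _ h2)

lemma extOrder_eq_of_card {E : Type*} [DecidableEq E] {F : Finset (Finset E)}
    {pairs : Finset (Finset E × Finset E)}
    (hp : ∀ p ∈ pairs, p.1.card ≤ p.2.card)
    (hp' : ∀ p ∈ pairs, p.1.card < p.2.card) {X Y : Finset E}
    (h : extOrder F pairs X Y) (hc : Y.card ≤ X.card) : X = Y := by
  induction h with
  | refl => rfl
  | @tail b c hXb hbc ih =>
    have h1 : X.card ≤ b.card := extOrder_card_le hp hXb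
    rcases hbc with h2 | h2
    · have hbc' : b.card ≤ c.card := Finset.card_le_card h2.2.2
      have hb : b = c := Finset.eq_of_subset_of_card_le h2.2.2 (by omega)
      subst hb
      exact ih (by omega)
    · have h3 : b.card < c.card := hp' _ h2
      omega

lemma extOrder_subset {E : Type*} [DecidableEq E] {F : Finset (Finset E)}
    {pairs : Finset (Finset E × Finset E)} (n : ℕ)
    (hp : ∀ p ∈ pairs, n < p.2.card) {X Y : Finset E}
    (h : extOrder F pairs X Y) (hc : Y.card ≤ n) : X ⊆ Y := by
  induction h with
  | refl => exact subset_rfl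
  | @tail b c hXb hbc ih =>
    rcases hbc with h2 | h2
    · exact (ih ((Finset.card_le_card h2.2.2).trans hc)).trans h2.2.2
    · have h3 : n < c.card := hp _ h2
      omega

lemma filter_le_mem {E : Type*} [LinearOrder E] {F : Finset (Finset E)} (h0 : ∅ ∈ F)
    (hss : ∀ A ∈ F, ∀ B ∈ F, ∀ (h : ¬ B ⊆ A),
      insert ((B \ A).min' (Finset.sdiff_nonempty.mpr h)) A ∈ F)
    {B : Finset E} (hB : B ∈ F) (m : E) : (B.filter (· ≤ m)) ∈ F := by
  set V := B.filter (· ≤ m) with hVdef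
  suffices h : ∀ k (W : Finset E), W ∈ F → W ⊆ V → V.card ≤ W.card + k → V ∈ F by
    exact h V.card ∅ h0 (Finset.empty_subset _) (by simp)
  intro k
  induction k with
  | zero =>
    intro W hW hWV hc
    exact Finset.eq_of_subset_of_card_le hWV (by omega) ▸ hW
  | succ k ih =>
    intro W hW hWV hc
    by_cases heq : W = V
    · exact heq ▸ hW
    · obtain ⟨x, hxV, hxW⟩ := Finset.exists_of_ssubset (ssubset_of_subset_of_ne hWV heq)
      have hxB : x ∈ B := (Finset.mem_filter.mp hxV).1
      have hxm : x ≤ m := (Finset.mem_filter.mp hxV).2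
      have hnBW : ¬ B ⊆ W := fun h => hxW (h hxB)
      have hmem := hss W hW B hB hnBW
      set y := (B \ W).min' (Finset.sdiff_nonempty.mpr hnBW) with hy
      have hyBW : y ∈ B \ W := Finset.min'_mem _ _
      have hyx : y ≤ x := Finset.min'_le _ _ (Finset.mem_sdiff.mpr ⟨hxB, hxW⟩)
      have hyV : y ∈ V := Finset.mem_filter.mpr ⟨(Finset.mem_sdiff.mp hyBW).1, hyx.trans hxm⟩
      have hyW : y ∉ W := (Finset.mem_sdiff.mp hyBW).2
      have hcard : (insert y W).card = W.card + 1 := Finset.card_insert_of_notMem hyW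
      exact ih (insert y W) hmem (Finset.insert_subset hyV hWV) (by omega)

/-- every finite supersolvable join-distributive lattice (realized, per
the equivalence proved in the paper, as the lattice of feasible sets of a supersolvable
antimatroid, graded by cardinality) is a maximal graded lattice: adding any finite
nonempty collection of cover relations `A ≺ B` with `|B| = |A| + 1` and `A, B`
incomparable yields an order that is no longer a lattice. -/
theorem supersolvable_join_distributive_maximal {E : Type*} [Fintype E] [LinearOrder E]
    (F : Finset (Finset E)) (h0 : ∅ ∈ F)
    (hss : ∀ A ∈ F, ∀ B ∈ F, ∀ (h : ¬ B ⊆ A),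
      insert ((B \ A).min' (Finset.sdiff_nonempty.mpr h)) A ∈ F)
    (pairs : Finset (Finset E × Finset E)) (hne : pairs.Nonempty)
    (hpairs : ∀ p ∈ pairs, p.1 ∈ F ∧ p.2 ∈ F ∧ p.2.card = p.1.card + 1 ∧
      ¬ p.1 ⊆ p.2 ∧ ¬ p.2 ⊆ p.1) :
    ¬ ((∀ X ∈ F, ∀ Y ∈ F, ∃ Z ∈ F, extOrder F pairs Z X ∧ extOrder F pairs Z Y ∧
          ∀ V ∈ F, extOrder F pairs V X → extOrder F pairs V Y → extOrder F pairs V Z) ∧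
       (∀ X ∈ F, ∀ Y ∈ F, ∃ Z ∈ F, extOrder F pairs X Z ∧ extOrder F pairs Y Z ∧
          ∀ V ∈ F, extOrder F pairs X V → extOrder F pairs Y V → extOrder F pairs Z V)) := by
  rintro ⟨hmeet, -⟩
  -- choose a pair with minimal first-component cardinality
  obtain ⟨p, hpmem, hpmin⟩ := pairs.exists_min_image (fun p => p.1.card) hne
  obtain ⟨A, B⟩ := p
  obtain ⟨hA, hB, hcard, hAB, hBA⟩ := hpairs _ hpmem
  have hcard' : B.card = A.card + 1 := hcard
  have hple : ∀ q ∈ pairs, q.1.card ≤ q.2.card := fun q hq => by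
    have := (hpairs q hq).2.2.1; omega
  have hplt : ∀ q ∈ pairs, q.1.card < q.2.card := fun q hq => by
    have := (hpairs q hq).2.2.1; omega
  have hpgt : ∀ q ∈ pairs, A.card < q.2.card := fun q hq => by
    have h1 := (hpairs q hq).2.2.1
    have h2 : A.card ≤ q.1.card := hpmin q hq
    omega
  -- the construction
  have hnBA : ¬ B ⊆ A := hBA
  set m := (B \ A).min' (Finset.sdiff_nonempty.mpr hnBA) with hm
  have hmBA : m ∈ B \ A := Finset.min'_mem _ _
  have hmB : m ∈ B := (Finset.mem_sdiff.mp hmBA).1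
  have hmA : m ∉ A := (Finset.mem_sdiff.mp hmBA).2
  set C := insert m A with hC
  have hCF : C ∈ F := hss A hA B hB hnBA
  have hCcard : C.card = A.card + 1 := Finset.card_insert_of_notMem hmA
  set V := B.filter (· ≤ m) with hV
  have hVF : V ∈ F := filter_le_mem h0 hss hB m
  have hVB : V ⊆ B := Finset.filter_subset _ _
  have hVC : V ⊆ C := by
    intro x hx
    obtain ⟨hxB, hxm⟩ := Finset.mem_filter.mp hx
    rcases eq_or_lt_of_le hxm with h | h
    · exact h ▸ Finset.mem_insert_self _ _
    · by_cases hxA : x ∈ A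
      · exact Finset.mem_insert_of_mem hxA
      · exact absurd (Finset.min'_le _ _ (Finset.mem_sdiff.mpr ⟨hxB, hxA⟩)) (not_le.mpr h)
  have hmV : m ∈ V := Finset.mem_filter.mpr ⟨hmB, le_refl m⟩
  -- apply the meet hypothesis to B and C
  obtain ⟨Z, hZF, hZB, hZC, hZmax⟩ := hmeet B hB C hCF
  have hAB' : extOrder F pairs A B := Relation.ReflTransGen.single (Or.inr hpmem)
  have hAC : extOrder F pairs A C :=
    Relation.ReflTransGen.single (Or.inl ⟨hA, hCF, Finset.subset_insert _ _⟩)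
  have hVB' : extOrder F pairs V B := Relation.ReflTransGen.single (Or.inl ⟨hVF, hB, hVB⟩)
  have hVC' : extOrder F pairs V C := Relation.ReflTransGen.single (Or.inl ⟨hVF, hCF, hVC⟩)
  have hAZ : extOrder F pairs A Z := hZmax A hA hAB' hAC
  have hVZ : extOrder F pairs V Z := hZmax V hVF hVB' hVC'
  have h1 : A.card ≤ Z.card := extOrder_card_le hple hAZ
  have h2 : Z.card ≤ C.card := extOrder_card_le hple hZC
  rcases eq_or_lt_of_le h1 with hZcard | hZcard
  · -- Z has the same card as A, so Z = A, but V ≤ Z forces V ⊆ A, contradicting m ∈ V \ A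
    have hZA : A = Z := extOrder_eq_of_card hple hplt hAZ (by omega)
    have : V ⊆ A := extOrder_subset A.card hpgt (hZA ▸ hVZ) (le_refl _)
    exact hmA (this hmV)
  · -- Z = C, then C ≤ B with equal cards forces C = B, so A ⊆ B, contradiction
    have hZC' : Z = C := extOrder_eq_of_card hple hplt hZC (by omega)
    have hBC : B.card ≤ C.card := by omega
    have hCB : C = B := extOrder_eq_of_card hple hplt (hZC' ▸ hZB) hBC
    exact hAB (hCB ▸ (Finset.subset_insert m A : A ⊆ C))


end SortingPaper
end

section
/- Let s ∈ S and α, β words in the generators of a Coxeter system (W,S). If the concatenations αβ, αs, and sβ are all reduced words, then αsβ is a reduced word. -/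
/-!
Tits' parity action: each simple reflection `s` acts on `W × ZMod 2` by
`(t, e) ↦ (s t s, e + [t = s])`. The Coxeter relations hold because the reflections met along
`(ab)^m`, namely `(ab)^(-k) b` for `k < 2m`, repeat with period `m` when `(ab)^m = 1`.
For a word `ω`, the `ZMod 2` part of `π ω • (t, 0)` is the number of occurrences of `t` in the
right inversion sequence of `ω`, hence depends only on `π ω`; comparing `w` with `w t` shows that
every right inversion `t` of `π ω` occurs in that sequence (strong exchange).

With `t = β⁻¹ s β` one has `αβ · t = αsβ`. If `αsβ` is not reduced, then since reflections change
length `t` is a right inversion of `αβ`, so it occurs in the inversion sequence of `αβ`: either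
`s` occurs in that of `α`, or `t` in that of `β`. The first repeats the last entry `s` of the
inversion sequence of `αs`, the second the first entry `t` of that of `sβ`; but reduced words have
inversion sequences without repetitions.
-/

namespace SortingPaper

variable {B : Type*} {M : CoxeterMatrix B} {W : Type*} [Group W]

section ParityPerm

variable {G : Type*} [Group G] [DecidableEq G]

def parityPerm (g : G) : Equiv.Perm (G × ZMod 2) where
  toFun p := (g * p.1 * g⁻¹, p.2 + if p.1 = g then 1 else 0)
  invFun p := (g⁻¹ * p.1 * g, p.2 + if p.1 = g then 1 else 0)
  left_inv := by
    rintro ⟨t, e⟩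
    have hg : g * t * g⁻¹ = g ↔ t = g := by rw [mul_inv_eq_iff_eq_mul, mul_right_inj]
    ext
    · simp [mul_assoc]
    · by_cases h : t = g <;> simp [h, hg, add_assoc, CharTwo.add_self_eq_zero]
  right_inv := by
    rintro ⟨t, e⟩
    have hg : g⁻¹ * t * g = g ↔ t = g := by rw [mul_assoc, inv_mul_eq_iff_eq_mul, mul_left_inj]
    ext
    · simp [mul_assoc]
    · by_cases h : t = g <;> simp [h, hg, add_assoc, CharTwo.add_self_eq_zero]

theorem parityPerm_apply (g t : G) (e : ZMod 2) :
    parityPerm g (t, e) = (g * t * g⁻¹, e + if t = g then 1 else 0) := rfl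

theorem parityPerm_mul_parityPerm_pow_apply {a b : G} (ha : a * a = 1) (hb : b * b = 1)
    (n : ℕ) (t : G) (e : ZMod 2) :
    ((parityPerm a * parityPerm b) ^ n) (t, e) =
      ((a * b) ^ n * t * ((a * b) ^ n)⁻¹,
        e + ∑ k ∈ Finset.range (2 * n), if (a * b) ^ k * t = b then 1 else 0) := by
  have ha' : a⁻¹ = a := inv_eq_of_mul_eq_one_right ha
  have hb' : b⁻¹ = b := inv_eq_of_mul_eq_one_right hb
  have hswap : ∀ n : ℕ, b * (a * b) ^ n = ((a * b) ^ n)⁻¹ * b := fun n => by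
    have : SemiconjBy b (a * b) (a * b)⁻¹ := by simp [SemiconjBy, ha', hb', mul_assoc]
    rw [(this.pow_right n).eq, inv_pow]
  induction n with
  | zero => simp
  | succ n ih =>
    have hconj : ∀ m, (a * b) ^ n * t * ((a * b) ^ n)⁻¹ = ((a * b) ^ m)⁻¹ * b ↔
        (a * b) ^ (2 * n + m) * t = b := fun m => by
      rw [mul_inv_eq_iff_eq_mul, mul_assoc _ b, hswap, ← mul_assoc, ← mul_inv_rev,
        eq_inv_mul_iff_mul_eq, ← mul_assoc, ← pow_add, ← pow_add]
      ring_nf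
    have hb_eq : (a * b) ^ n * t * ((a * b) ^ n)⁻¹ = b ↔ (a * b) ^ (2 * n) * t = b := by
      simpa using hconj 0
    have ha_eq : b * ((a * b) ^ n * t * ((a * b) ^ n)⁻¹) * b⁻¹ = a ↔
        (a * b) ^ (2 * n + 1) * t = b := by
      rw [← hconj 1, mul_inv_eq_iff_eq_mul, ← eq_inv_mul_iff_mul_eq, pow_one, hb']
      simp only [mul_inv_rev, ha', hb', mul_assoc]
    rw [pow_succ', Equiv.Perm.mul_apply, ih, Equiv.Perm.mul_apply, parityPerm_apply,
      parityPerm_apply, if_congr hb_eq rfl rfl, if_congr ha_eq rfl rfl,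
      show 2 * (n + 1) = 2 * n + 1 + 1 by ring, Finset.sum_range_succ, Finset.sum_range_succ]
    ext
    · simp only [pow_succ', mul_inv_rev]
      group
    · simp only [add_assoc]

theorem parityPerm_mul_parityPerm_pow_eq_one {a b : G} (ha : a * a = 1) (hb : b * b = 1)
    {m : ℕ} (hm : (a * b) ^ m = 1) : (parityPerm a * parityPerm b) ^ m = 1 := by
  ext ⟨t, e⟩ : 1
  rw [parityPerm_mul_parityPerm_pow_apply ha hb, hm, two_mul, Finset.sum_range_add]
  simp [pow_add, hm, CharTwo.add_self_eq_zero]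

end ParityPerm

open CoxeterSystem

section ParityRep

variable (cs : CoxeterSystem M W) [DecidableEq W]

def parityRep : W →* Equiv.Perm (W × ZMod 2) :=
  cs.lift ⟨fun i => parityPerm (cs.simple i), fun i j =>
    parityPerm_mul_parityPerm_pow_eq_one (cs.simple_mul_simple_self i)
      (cs.simple_mul_simple_self j) (cs.simple_mul_simple_pow i j)⟩

theorem parityRep_simple (i : B) : parityRep cs (cs.simple i) = parityPerm (cs.simple i) :=
  cs.lift_apply_simple _ i

def inversionParity (w t : W) : ZMod 2 := (parityRep cs w (t, 0)).2

theorem parityRep_apply (w t : W) (e : ZMod 2) :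
    parityRep cs w (t, e) = (w * t * w⁻¹, e + inversionParity cs w t) := by
  induction w using cs.simple_induction_left generalizing t e with
  | one => simp [inversionParity]
  | mul_simple_left w i ih =>
    rw [inversionParity, map_mul, Equiv.Perm.mul_apply, Equiv.Perm.mul_apply, ih, ih,
      parityRep_simple, parityPerm_apply, parityPerm_apply]
    refine Prod.ext ?_ ?_
    · simp only [mul_inv_rev, mul_assoc]
    · ring

theorem inversionParity_one (t : W) : inversionParity cs 1 t = 0 := by
  simp [inversionParity]

theorem inversionParity_mul (u v t : W) :
    inversionParity cs (u * v) t =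
      inversionParity cs v t + inversionParity cs u (v * t * v⁻¹) := by
  rw [inversionParity, map_mul, Equiv.Perm.mul_apply, parityRep_apply, parityRep_apply]
  simp

theorem inversionParity_simple (i : B) (t : W) :
    inversionParity cs (cs.simple i) t = if t = cs.simple i then 1 else 0 := by
  simp [inversionParity, parityRep_simple, parityPerm_apply]

theorem inversionParity_wordProd (ω : List B) (t : W) :
    inversionParity cs (cs.wordProd ω) t = ((cs.rightInvSeq ω).count t : ZMod 2) := by
  induction ω with
  | nil => simp [inversionParity_one]
  | cons i ω ih =>
    rw [wordProd_cons, inversionParity_mul, ih, inversionParity_simple, rightInvSeq,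
      List.count_cons]
    have hconj : cs.wordProd ω * t * (cs.wordProd ω)⁻¹ = cs.simple i ↔
        (cs.wordProd ω)⁻¹ * cs.simple i * cs.wordProd ω = t := by
      constructor <;> intro h <;> rw [← h] <;> group
    simp [hconj]

theorem inversionParity_self_of_isReflection {t : W} (ht : cs.IsReflection t) :
    inversionParity cs t t = 1 := by
  obtain ⟨x, i, rfl⟩ := ht
  have h1 := inversionParity_mul cs (x * cs.simple i) x⁻¹ (x * cs.simple i * x⁻¹)
  have h2 := inversionParity_mul cs x (cs.simple i) (cs.simple i)
  have h3 := inversionParity_mul cs x⁻¹ x (cs.simple i)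
  have hconj : x⁻¹ * (x * cs.simple i * x⁻¹) * x = cs.simple i := by group
  simp only [hconj, inv_mul_cancel, inversionParity_one, inversionParity_simple, inv_inv,
    cs.inv_simple, cs.simple_mul_simple_cancel_right, if_pos] at h1 h2 h3
  rw [h1, h2]
  linear_combination -h3

theorem mem_rightInvSeq_of_inversionParity_ne_zero {ω : List B} {t : W}
    (h : inversionParity cs (cs.wordProd ω) t ≠ 0) : t ∈ cs.rightInvSeq ω := by
  rw [inversionParity_wordProd] at h
  exact List.count_pos_iff.mp (Nat.pos_of_ne_zero (by rintro h0; simp [h0] at h))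

end ParityRep

theorem mem_rightInvSeq_of_isRightInversion (cs : CoxeterSystem M W) {ω : List B} {t : W}
    (h : cs.IsRightInversion (cs.wordProd ω) t) : t ∈ cs.rightInvSeq ω := by
  classical
  by_contra hnot
  have hω : inversionParity cs (cs.wordProd ω) t = 0 :=
    not_not.mp (mt (mem_rightInvSeq_of_inversionParity_ne_zero cs) hnot)
  obtain ⟨ψ, hψ, hwt⟩ := cs.exists_isReduced (cs.wordProd ω * t)
  have hψt : t ∈ cs.rightInvSeq ψ := by
    apply mem_rightInvSeq_of_inversionParity_ne_zero
    rw [← hwt, inversionParity_mul, mul_inv_cancel_right, hω,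
      inversionParity_self_of_isReflection cs h.1]
    decide
  have hlt := (cs.isRightInversion_of_mem_rightInvSeq hψ hψt).2
  rw [← hwt, mul_assoc, h.1.mul_self, mul_one] at hlt
  exact lt_asymm h.2 hlt

theorem rightInvSeq_append (cs : CoxeterSystem M W) (α β : List B) :
    cs.rightInvSeq (α ++ β) =
      (cs.rightInvSeq α).map (MulAut.conj (cs.wordProd β)⁻¹) ++ cs.rightInvSeq β := by
  induction α with
  | nil => simp
  | cons i α ih =>
    simp only [List.cons_append, rightInvSeq, ih, List.map_cons, wordProd_append,
      MulAut.conj_apply, mul_inv_rev, inv_inv, mul_assoc]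

/-- Gluing: if `αβ`, `αs` and `sβ` are reduced words, then so is
`αsβ`. -/
theorem gluing (cs : CoxeterSystem M W) (s : B) (α β : List B)
    (h1 : cs.IsReduced (α ++ β)) (h2 : cs.IsReduced (α ++ [s]))
    (h3 : cs.IsReduced (s :: β)) :
    cs.IsReduced (α ++ s :: β) := by
  by_contra hαsβ
  set t := (cs.wordProd β)⁻¹ * cs.simple s * cs.wordProd β
  have ht : cs.IsReflection t := ⟨(cs.wordProd β)⁻¹, s, by rw [inv_inv]⟩
  have hmul : cs.wordProd (α ++ β) * t = cs.wordProd (α ++ s :: β) := by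
    simp only [t, wordProd_append, wordProd_cons]
    group
  have hinv : cs.IsRightInversion (cs.wordProd (α ++ β)) t := by
    refine ⟨ht, ?_⟩
    have hle := cs.length_wordProd_le (α ++ s :: β)
    have hne := ht.length_mul_left_ne (cs.wordProd (α ++ β))
    rw [hmul] at hne ⊢
    simp only [CoxeterSystem.IsReduced, List.length_append, List.length_cons] at h1 hαsβ hle
    omega
  have hmem := mem_rightInvSeq_of_isRightInversion cs hinv
  rw [rightInvSeq_append, List.mem_append] at hmem
  rcases hmem with hα | hβ
  · obtain ⟨r, hr, hrt⟩ := List.mem_map.mp hα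
    obtain rfl : r = cs.simple s := by simpa [t] using hrt
    have hnodup := h2.nodup_rightInvSeq
    rw [rightInvSeq_append, List.nodup_append] at hnodup
    exact hnodup.2.2 _ (List.mem_map_of_mem hr) (cs.simple s) (by simp) (by simp [cs.inv_simple])
  · exact (List.nodup_cons.mp h3.nodup_rightInvSeq).1 hβ

end SortingPaper
end
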